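/- arXiv:2401.01337 — 6 statements merged into one kernel-verified Lean document; each statement's English description precedes it below -/
import Mathlib

section
/- (Lemma 3.1) Assume C(k,p) ≥ r and C(n−k−1, m−p−1) ≥ r, the scalars λ_1, …, λ_r are all nonzero, and let α ∈ B_1. If the vectors [u_1]_{B_0}, …, [u_r]_{B_0} are linearly independent and the vectors [u_1]_{O_α}, …, [u_r]_{O_α} are linearly independent, then the matrix A[α,F] ∈ ℂ^{O_α × B_0} has full column rank (i.e., its r columns are linearly independent). -/
/-- `β` is a squarefree multi-index (monomial `x^β`) of degree `p` supported in the first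
`k` variables, i.e. of the form `x_{i₁}⋯x_{i_p}` with `i₁ < ⋯ < i_p` among the first `k`
variables.  These are the candidate monomials for `B₀`. -/
def IsB0Monomial (n k p : ℕ) (β : Fin n → ℕ) : Prop :=
  (∀ j, β j ≤ 1) ∧ (∑ j, β j = p) ∧ (∀ j, β j ≠ 0 → (j : ℕ) < k)

/-- `α ∈ B₁`: `α` is a squarefree multi-index of degree `p+1` with exactly one support
index among the last `n - k` variables (so `α = e_{j₁}+⋯+e_{j_p}+e_{j_{p+1}}` with
`j₁ < ⋯ < j_p` among the first `k` variables and `j_{p+1}` among the rest). -/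
def MemB1 (n k p : ℕ) (α : Fin n → ℕ) : Prop :=
  (∀ j, α j ≤ 1) ∧ (∑ j, α j = p + 1) ∧
    (∑ j ∈ Finset.univ.filter (fun j : Fin n => k ≤ (j : ℕ)), α j = 1)

/-- `γ ∈ O_α`: `γ` is a squarefree multi-index of degree `m - p - 1` supported in the
last `n - k` variables and avoiding the unique support index `j_{p+1}` of `α` there. -/
def MemOalpha (n m p k : ℕ) (α γ : Fin n → ℕ) : Prop :=
  (∀ j, γ j ≤ 1) ∧ (∑ j, γ j = m - p - 1) ∧ (∀ j, γ j ≠ 0 → k ≤ (j : ℕ) ∧ α j = 0)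

/-- Lemma 3.1: if `C(k,p) ≥ r`, `C(n-k-1, m-p-1) ≥ r`, the scalars `λ i`
are nonzero, `α ∈ B₁`, and the vectors `[u i]_{B₀}` as well as `[u i]_{O_α}` are linearly
independent, then the matrix `A[α,F]`, with entries `A[α,F]_{γ,β} = F_{β+γ}` for
`(γ, β) ∈ O_α × B₀`, where `F = ∑ i, λ i (1, u i)^{⊗ m}` (so `F_α = ∑ i, λ i * (u i)^α`),
has full column rank, i.e. its `r` columns are linearly independent. -/
theorem matrix_A_full_column_rank
    (n m r p k : ℕ) (hn : 0 < n) (hm : 3 ≤ m) (hr : 0 < r)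
    (hp1 : 1 ≤ p) (hp2 : p ≤ m - 2) (hk1 : p ≤ k) (hk2 : k ≤ n - m + p)
    (hbin0 : r ≤ Nat.choose k p) (hbin1 : r ≤ Nat.choose (n - k - 1) (m - p - 1))
    (lam : Fin r → ℂ) (hlam : ∀ i, lam i ≠ 0)
    (u : Fin r → Fin n → ℂ)
    (B0 : Finset (Fin n → ℕ))
    (hB0 : ∀ β ∈ B0, IsB0Monomial n k p β)
    (hB0card : B0.card = r)
    (hB0first : ∀ β ∈ B0, ∀ γ : Fin n → ℕ, IsB0Monomial n k p γ →
      toLex β ≤ toLex γ → γ ∈ B0)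
    (F : (Fin n → ℕ) → ℂ)
    (hF : ∀ β : Fin n → ℕ, F β = ∑ i, lam i * ∏ j, u i j ^ β j)
    (α : Fin n → ℕ) (hα : MemB1 n k p α)
    (huB0 : LinearIndependent ℂ
      (fun i : Fin r => fun β : {β : Fin n → ℕ // β ∈ B0} => ∏ j, u i j ^ β.1 j))
    (huOα : LinearIndependent ℂ
      (fun i : Fin r => fun γ : {γ : Fin n → ℕ // MemOalpha n m p k α γ} =>
        ∏ j, u i j ^ γ.1 j)) :
    LinearIndependent ℂ
      (fun β : {β : Fin n → ℕ // β ∈ B0} =>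
        fun γ : {γ : Fin n → ℕ // MemOalpha n m p k α γ} => F (β.1 + γ.1)) := by

  classical
  -- reindex B0 by Fin r
  have hcard : Fintype.card {β : Fin n → ℕ // β ∈ B0} = r := by
    simpa using hB0card
  let e : {β : Fin n → ℕ // β ∈ B0} ≃ Fin r :=
    Fintype.equivFinOfCardEq hcard
  -- square matrix M i j = u i ^ (β_j)
  let M : Matrix (Fin r) (Fin r) ℂ := fun i j => ∏ l, u i l ^ (e.symm j).1 l
  have hMrows : LinearIndependent ℂ (fun i => M i) := by
    have := huB0.map' (LinearEquiv.funCongrLeft ℂ ℂ e.symm).toLinearMap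
      (LinearEquiv.funCongrLeft ℂ ℂ e.symm).ker
    exact this
  have hMcols : LinearIndependent ℂ (fun j => M.transpose j) :=
    Matrix.linearIndependent_cols_iff_isUnit.2
      (Matrix.linearIndependent_rows_iff_isUnit.1 hMrows)
  rw [Fintype.linearIndependent_iff]
  intro g hg
  -- evaluate the relation at each γ
  have key : ∀ i : Fin r, lam i * ∑ β : {β : Fin n → ℕ // β ∈ B0},
      g β * ∏ j, u i j ^ β.1 j = 0 := by
    have hrel : ∑ i : Fin r, (lam i * ∑ β : {β : Fin n → ℕ // β ∈ B0},
        g β * ∏ j, u i j ^ β.1 j) •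
        (fun γ : {γ : Fin n → ℕ // MemOalpha n m p k α γ} =>
          ∏ j, u i j ^ γ.1 j) = 0 := by
      funext γ
      have := congrFun hg γ
      simp only [Finset.sum_apply, Pi.smul_apply, smul_eq_mul, Pi.zero_apply] at this ⊢
      rw [← this]
      simp only [hF, Finset.mul_sum, Finset.sum_mul]
      rw [Finset.sum_comm]
      refine Finset.sum_congr rfl fun β _ => Finset.sum_congr rfl fun i _ => ?_
      have : ∏ j, u i j ^ (β.1 + γ.1) j
          = (∏ j, u i j ^ β.1 j) * ∏ j, u i j ^ γ.1 j := by
        rw [← Finset.prod_mul_distrib]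
        exact Finset.prod_congr rfl fun j _ => by simp [pow_add]
      rw [this]; ring
    intro i
    exact (Fintype.linearIndependent_iff.1 huOα) _ hrel i
  have key2 : ∀ i : Fin r, ∑ β : {β : Fin n → ℕ // β ∈ B0},
      g β * ∏ j, u i j ^ β.1 j = 0 := fun i =>
    (mul_eq_zero.1 (key i)).resolve_left (hlam i)
  have hrel2 : ∑ j : Fin r, (g (e.symm j)) • M.transpose j = 0 := by
    funext i
    simp only [Finset.sum_apply, Pi.smul_apply, smul_eq_mul, Pi.zero_apply,
      Matrix.transpose_apply, M]
    rw [← key2 i]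
    exact (Equiv.sum_comp e.symm fun β => g β * ∏ l, u i l ^ β.1 l)
  have hz := Fintype.linearIndependent_iff.1 hMcols _ hrel2
  intro β
  have := hz (e β)
  simpa using this
end

section
/- (Theorem 3.2) Assume C(k,p) ≥ r and C(n−k−1, m−p−1) ≥ r, the scalars λ_1, …, λ_r are all nonzero, the vectors [u_1]_{B_0}, …, [u_r]_{B_0} are linearly independent, and for every α ∈ B_1 the vectors [u_1]_{O_α}, …, [u_r]_{O_α} are linearly independent. Then there exists a unique generating matrix G ∈ ℂ^{B_0 × B_1} for the tensor F = Σ_{i=1}^r λ_i (1,u_i)^{⊗m}. -/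
/-- Theorem 3.2: if `C(k,p) ≥ r`, `C(n-k-1, m-p-1) ≥ r`, the scalars `λ i`
are nonzero, the vectors `[u i]_{B₀}` are linearly independent, and for every `α ∈ B₁`
the vectors `[u i]_{O_α}` are linearly independent, then there is a unique generating
matrix `G ∈ ℂ^{B₀ × B₁}` for `F = ∑ i, λ i (1, u i)^{⊗ m}`, i.e. a unique `G` such that
`∑_{θ ∈ B₀} G(θ, α) F_{θ+β} = F_{α+β}` for all `α ∈ B₁` and all multi-indices `β` with
`|β| ≤ m - p - 1`. -/
theorem exists_unique_generating_matrix
    (n m r p k : ℕ) (hn : 0 < n) (hm : 3 ≤ m) (hr : 0 < r)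
    (hp1 : 1 ≤ p) (hp2 : p ≤ m - 2) (hk1 : p ≤ k) (hk2 : k ≤ n - m + p)
    (hbin0 : r ≤ Nat.choose k p) (hbin1 : r ≤ Nat.choose (n - k - 1) (m - p - 1))
    (lam : Fin r → ℂ) (hlam : ∀ i, lam i ≠ 0)
    (u : Fin r → Fin n → ℂ)
    (B0 : Finset (Fin n → ℕ))
    (hB0 : ∀ β ∈ B0, IsB0Monomial n k p β)
    (hB0card : B0.card = r)
    (hB0first : ∀ β ∈ B0, ∀ γ : Fin n → ℕ, IsB0Monomial n k p γ →
      toLex β ≤ toLex γ → γ ∈ B0)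
    (F : (Fin n → ℕ) → ℂ)
    (hF : ∀ β : Fin n → ℕ, F β = ∑ i, lam i * ∏ j, u i j ^ β j)
    (huB0 : LinearIndependent ℂ
      (fun i : Fin r => fun β : {β : Fin n → ℕ // β ∈ B0} => ∏ j, u i j ^ β.1 j))
    (huOα : ∀ α : Fin n → ℕ, MemB1 n k p α → LinearIndependent ℂ
      (fun i : Fin r => fun γ : {γ : Fin n → ℕ // MemOalpha n m p k α γ} =>
        ∏ j, u i j ^ γ.1 j)) :
    ∃! G : {θ : Fin n → ℕ // θ ∈ B0} → {α : Fin n → ℕ // MemB1 n k p α} → ℂ,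
      ∀ (α : {α : Fin n → ℕ // MemB1 n k p α}) (β : Fin n → ℕ),
        (∑ j, β j) ≤ m - p - 1 →
        ∑ θ : {θ : Fin n → ℕ // θ ∈ B0}, G θ α * F (θ.1 + β) = F (α.1 + β) := by

  classical
  obtain ⟨e⟩ : Nonempty ({θ : Fin n → ℕ // θ ∈ B0} ≃ Fin r) := by
    refine ⟨Fintype.equivFinOfCardEq ?_⟩
    simpa [Fintype.card_coe] using hB0card
  set A : Matrix (Fin r) (Fin r) ℂ :=
    fun i j => ∏ jj, u i jj ^ (e.symm j).1 jj with hA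
  have hprod : ∀ (i : Fin r) (β γ : Fin n → ℕ),
      (∏ j, u i j ^ (β + γ) j) = (∏ j, u i j ^ β j) * (∏ j, u i j ^ γ j) := by
    intro i β γ
    rw [← Finset.prod_mul_distrib]
    exact Finset.prod_congr rfl fun j _ => by simp [pow_add]
  have hrows : LinearIndependent ℂ (fun i => A i) := by
    rw [Fintype.linearIndependent_iff]
    intro c hc
    refine Fintype.linearIndependent_iff.mp huB0 c ?_
    funext θ
    have h := congrFun hc (e θ)
    simpa [Finset.sum_apply, hA] using h
  have hAunit : IsUnit A := Matrix.linearIndependent_rows_iff_isUnit.mp hrows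
  have hdet : IsUnit A.det := (Matrix.isUnit_iff_isUnit_det A).mp hAunit
  set G0 : {θ : Fin n → ℕ // θ ∈ B0} → {α : Fin n → ℕ // MemB1 n k p α} → ℂ :=
    fun θ α => A⁻¹.mulVec (fun i => ∏ j, u i j ^ α.1 j) (e θ) with hG0
  -- the key algebraic identity satisfied by `G0`
  have hsolve : ∀ (α : {α : Fin n → ℕ // MemB1 n k p α}) (i : Fin r),
      ∑ θ : {θ : Fin n → ℕ // θ ∈ B0}, G0 θ α * ∏ j, u i j ^ θ.1 j
        = ∏ j, u i j ^ α.1 j := by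
    intro α i
    have h1 : A.mulVec (A⁻¹.mulVec (fun i => ∏ j, u i j ^ α.1 j))
        = fun i => ∏ j, u i j ^ α.1 j := by
      rw [Matrix.mulVec_mulVec, Matrix.mul_nonsing_inv _ hdet, Matrix.one_mulVec]
    calc ∑ θ : {θ : Fin n → ℕ // θ ∈ B0}, G0 θ α * ∏ j, u i j ^ θ.1 j
        = ∑ jj : Fin r, A i jj * A⁻¹.mulVec (fun i => ∏ j, u i j ^ α.1 j) jj := by
          refine Fintype.sum_equiv e _ _ fun θ => ?_
          simp [hA, hG0, mul_comm]
      _ = ∏ j, u i j ^ α.1 j := by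
          simpa [Matrix.mulVec, dotProduct] using congrFun h1 i
  -- generic expansion of the defining sums
  have expand : ∀ (G : {θ : Fin n → ℕ // θ ∈ B0} → {α : Fin n → ℕ // MemB1 n k p α} → ℂ)
      (α : {α : Fin n → ℕ // MemB1 n k p α}) (β : Fin n → ℕ),
      ∑ θ : {θ : Fin n → ℕ // θ ∈ B0}, G θ α * F (θ.1 + β)
        = ∑ i, lam i * ((∑ θ : {θ : Fin n → ℕ // θ ∈ B0}, G θ α * ∏ j, u i j ^ θ.1 j)
            * ∏ j, u i j ^ β j) := by
    intro G α β
    calc ∑ θ : {θ : Fin n → ℕ // θ ∈ B0}, G θ α * F (θ.1 + β)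
        = ∑ θ : {θ : Fin n → ℕ // θ ∈ B0}, ∑ i,
            G θ α * (lam i * ((∏ j, u i j ^ θ.1 j) * ∏ j, u i j ^ β j)) := by
          refine Finset.sum_congr rfl fun θ _ => ?_
          rw [hF, Finset.mul_sum]
          exact Finset.sum_congr rfl fun i _ => by rw [hprod]
      _ = ∑ i, ∑ θ : {θ : Fin n → ℕ // θ ∈ B0},
            G θ α * (lam i * ((∏ j, u i j ^ θ.1 j) * ∏ j, u i j ^ β j)) := by
          rw [Finset.sum_comm]
      _ = ∑ i, lam i * ((∑ θ : {θ : Fin n → ℕ // θ ∈ B0}, G θ α * ∏ j, u i j ^ θ.1 j)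
            * ∏ j, u i j ^ β j) := by
          refine Finset.sum_congr rfl fun i _ => ?_
          rw [Finset.sum_mul, Finset.mul_sum]
          exact Finset.sum_congr rfl fun θ _ => by ring
  refine ⟨G0, ?_, ?_⟩
  · -- existence
    intro α β _
    rw [expand G0 α β, hF]
    refine Finset.sum_congr rfl fun i _ => ?_
    rw [hsolve α i, hprod]
  · -- uniqueness
    intro G hG
    funext θ α
    have hS : ∀ i : Fin r,
        ∑ θ : {θ : Fin n → ℕ // θ ∈ B0}, G θ α * ∏ j, u i j ^ θ.1 j
          = ∏ j, u i j ^ α.1 j := by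
      have hli := huOα α.1 α.2
      set d : Fin r → ℂ := fun i =>
        lam i * ((∑ θ : {θ : Fin n → ℕ // θ ∈ B0}, G θ α * ∏ j, u i j ^ θ.1 j)
          - ∏ j, u i j ^ α.1 j) with hd
      have hzero : ∀ i, d i = 0 := by
        refine Fintype.linearIndependent_iff.mp hli d ?_
        funext γ
        have hγsum : (∑ j, γ.1 j) ≤ m - p - 1 := le_of_eq γ.2.2.1
        have h1 := hG α γ.1 hγsum
        rw [expand G α γ.1, hF] at h1
        simp only [hprod] at h1
        simp only [Finset.sum_apply, Pi.smul_apply, smul_eq_mul, Pi.zero_apply]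
        have h2 : ∑ i, d i * ∏ j, u i j ^ γ.1 j
            = (∑ i, lam i * ((∑ θ : {θ : Fin n → ℕ // θ ∈ B0},
                  G θ α * ∏ j, u i j ^ θ.1 j) * ∏ j, u i j ^ γ.1 j))
              - ∑ i, lam i * ((∏ j, u i j ^ α.1 j) * ∏ j, u i j ^ γ.1 j) := by
          rw [← Finset.sum_sub_distrib]
          exact Finset.sum_congr rfl fun i _ => by simp only [hd]; ring
        rw [h2, h1, sub_eq_zero]
      intro i
      have h3 := hzero i
      simp only [hd] at h3
      rcases mul_eq_zero.mp h3 with h | h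
      · exact absurd h (hlam i)
      · exact sub_eq_zero.mp h
    have hc : A.mulVec (fun jj => G (e.symm jj) α) = fun i => ∏ j, u i j ^ α.1 j := by
      funext i
      simp only [Matrix.mulVec, dotProduct]
      rw [← hS i]
      refine Fintype.sum_equiv e.symm (fun jj => A i jj * G (e.symm jj) α)
        (fun θ => G θ α * ∏ j, u i j ^ θ.1 j) fun jj => ?_
      simp [hA, mul_comm]
    have h4 : (fun jj => G (e.symm jj) α)
        = A⁻¹.mulVec (fun i => ∏ j, u i j ^ α.1 j) := by
      have h5 := congrArg A⁻¹.mulVec hc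
      rwa [Matrix.mulVec_mulVec, Matrix.nonsing_inv_mul _ hdet, Matrix.one_mulVec] at h5
    have h6 := congrFun h4 (e θ)
    simpa [hG0] using h6
end

section
/- Assume C(k,p) ≥ r and C(n−k−1, m−p−1) ≥ r, the scalars λ_1, …, λ_r are all nonzero, the vectors [u_1]_{B_0}, …, [u_r]_{B_0} are linearly independent, and for every α ∈ B_1 the vectors [u_1]_{O_α}, …, [u_r]_{O_α} are linearly independent. Let G be the unique generating matrix of F = Σ_{i=1}^r λ_i (1,u_i)^{⊗m}, and for each l ∈ {k+1, …, n} define the matrix N_l(G) ∈ ℂ^{B_0 × B_0} by N_l(G)_{ν,θ} = G(θ, ν + e_l). Then for every l ∈ {k+1, …, n} and every i ∈ {1,…,r}, the vector [u_i]_{B_0} is an eigenvector of N_l(G) with eigenvalue (u_i)_l, i.e., N_l(G) [u_i]_{B_0} = (u_i)_l [u_i]_{B_0}. -/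
/-- under the conditions of Theorem 3.2, let `G` be the (unique) generating
matrix of `F = ∑ i, λ i (1, u i)^{⊗ m}` and, for `k+1 ≤ l ≤ n`, let `N_l(G)` be the
`B₀ × B₀` matrix with `N_l(G)_{ν,θ} = G(θ, ν + e_l)`.  Then for each such `l` and each
`i`, the vector `[u i]_{B₀}` is an eigenvector of `N_l(G)` with eigenvalue `(u i)_l`:
for all `ν ∈ B₀`, `∑_{θ ∈ B₀} G(θ, ν + e_l) (u i)^θ = (u i)_l * (u i)^ν`. -/
theorem generating_matrix_eigenvectors
    (n m r p k : ℕ) (hn : 0 < n) (hm : 3 ≤ m) (hr : 0 < r)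
    (hp1 : 1 ≤ p) (hp2 : p ≤ m - 2) (hk1 : p ≤ k) (hk2 : k ≤ n - m + p)
    (hbin0 : r ≤ Nat.choose k p) (hbin1 : r ≤ Nat.choose (n - k - 1) (m - p - 1))
    (lam : Fin r → ℂ) (hlam : ∀ i, lam i ≠ 0)
    (u : Fin r → Fin n → ℂ)
    (B0 : Finset (Fin n → ℕ))
    (hB0 : ∀ β ∈ B0, IsB0Monomial n k p β)
    (hB0card : B0.card = r)
    (hB0first : ∀ β ∈ B0, ∀ γ : Fin n → ℕ, IsB0Monomial n k p γ →
      toLex β ≤ toLex γ → γ ∈ B0)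
    (F : (Fin n → ℕ) → ℂ)
    (hF : ∀ β : Fin n → ℕ, F β = ∑ i, lam i * ∏ j, u i j ^ β j)
    (huB0 : LinearIndependent ℂ
      (fun i : Fin r => fun β : {β : Fin n → ℕ // β ∈ B0} => ∏ j, u i j ^ β.1 j))
    (huOα : ∀ α : Fin n → ℕ, MemB1 n k p α → LinearIndependent ℂ
      (fun i : Fin r => fun γ : {γ : Fin n → ℕ // MemOalpha n m p k α γ} =>
        ∏ j, u i j ^ γ.1 j))
    (G : (Fin n → ℕ) → (Fin n → ℕ) → ℂ)
    (hG : ∀ α : Fin n → ℕ, MemB1 n k p α → ∀ β : Fin n → ℕ, (∑ j, β j) ≤ m - p - 1 →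
      ∑ θ ∈ B0, G θ α * F (θ + β) = F (α + β)) :
    ∀ l : Fin n, k ≤ (l : ℕ) → ∀ i : Fin r, ∀ ν ∈ B0,
      ∑ θ ∈ B0, G θ (ν + Pi.single l 1) * ∏ j, u i j ^ θ j =
        u i l * ∏ j, u i j ^ ν j := by
  intro l hl i0 ν hν
  obtain ⟨hν1, hν2, hν3⟩ := hB0 ν hν
  have hνl : ν l = 0 := by
    by_contra h
    exact absurd (hν3 l h) (not_lt.2 hl)
  set α : Fin n → ℕ := ν + Pi.single l 1 with hαdef
  have hsingle_sum : ∑ j, (Pi.single l 1 : Fin n → ℕ) j = 1 := by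
    rw [Finset.sum_pi_single']
    simp
  have hα : MemB1 n k p α := by
    refine ⟨?_, ?_, ?_⟩
    · intro j
      rcases eq_or_ne j l with rfl | hj
      · simp [hαdef, hνl]
      · simp [hαdef, Pi.single_eq_of_ne hj, hν1 j]
    · have : ∑ j, α j = (∑ j, ν j) + ∑ j, (Pi.single l 1 : Fin n → ℕ) j := by
        simp [hαdef, Finset.sum_add_distrib]
      rw [this, hν2, hsingle_sum]
    · have h1 : ∑ j ∈ Finset.univ.filter (fun j : Fin n => k ≤ (j : ℕ)), ν j = 0 := by
        apply Finset.sum_eq_zero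
        intro j hj
        simp only [Finset.mem_filter] at hj
        by_contra h
        exact absurd (hν3 j h) (not_lt.2 hj.2)
      have h2 : ∑ j ∈ Finset.univ.filter (fun j : Fin n => k ≤ (j : ℕ)),
          (Pi.single l 1 : Fin n → ℕ) j = 1 := by
        rw [Finset.sum_pi_single']
        simp [hl]
      have : ∑ j ∈ Finset.univ.filter (fun j : Fin n => k ≤ (j : ℕ)), α j
          = (∑ j ∈ Finset.univ.filter (fun j : Fin n => k ≤ (j : ℕ)), ν j)
          + ∑ j ∈ Finset.univ.filter (fun j : Fin n => k ≤ (j : ℕ)),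
              (Pi.single l 1 : Fin n → ℕ) j := by
        simp [hαdef, Finset.sum_add_distrib]
      rw [this, h1, h2]
  set c : Fin r → ℂ :=
    fun i => lam i * ((∑ θ ∈ B0, G θ α * ∏ j, u i j ^ θ j) - ∏ j, u i j ^ α j) with hcdef
  have key : ∀ γ : Fin n → ℕ, MemOalpha n m p k α γ →
      ∑ i, c i * ∏ j, u i j ^ γ j = 0 := by
    intro γ hγ
    obtain ⟨hγ1, hγ2, hγ3⟩ := hγ
    have h := hG α hα γ hγ2.le
    simp only [hF, Pi.add_apply, pow_add, Finset.prod_mul_distrib] at h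
    have swap : ∑ θ ∈ B0, G θ α * ∑ i, lam i * ((∏ j, u i j ^ θ j) * ∏ j, u i j ^ γ j)
        = ∑ i, (∑ θ ∈ B0, G θ α * ∏ j, u i j ^ θ j) * (lam i * ∏ j, u i j ^ γ j) := by
      simp only [Finset.mul_sum, Finset.sum_mul]
      rw [Finset.sum_comm]
      exact Finset.sum_congr rfl fun i _ => Finset.sum_congr rfl fun θ _ => by ring
    rw [swap] at h
    calc ∑ i, c i * ∏ j, u i j ^ γ j
        = (∑ i, (∑ θ ∈ B0, G θ α * ∏ j, u i j ^ θ j) * (lam i * ∏ j, u i j ^ γ j))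
          - ∑ i, lam i * ((∏ j, u i j ^ α j) * ∏ j, u i j ^ γ j) := by
          rw [← Finset.sum_sub_distrib]
          exact Finset.sum_congr rfl fun i _ => by simp only [hcdef]; ring
      _ = 0 := by rw [h]; ring
  have hc0 : ∀ i, c i = 0 := by
    have hli := Fintype.linearIndependent_iff.mp (huOα α hα) c ?_
    · exact hli
    · funext γ
      have := key γ.1 γ.2
      simpa [Finset.sum_apply, smul_eq_mul] using this
  have hci := hc0 i0
  rw [hcdef] at hci
  have h2 : (∑ θ ∈ B0, G θ α * ∏ j, u i0 j ^ θ j) = ∏ j, u i0 j ^ α j := by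
    rcases mul_eq_zero.mp hci with h | h
    · exact absurd h (hlam i0)
    · exact sub_eq_zero.mp h
  have hαprod : ∏ j, u i0 j ^ α j = u i0 l * ∏ j, u i0 j ^ ν j := by
    have : ∏ j, u i0 j ^ α j
        = (∏ j, u i0 j ^ ν j) * ∏ j, u i0 j ^ (Pi.single l 1 : Fin n → ℕ) j := by
      simp [hαdef, pow_add, Finset.prod_mul_distrib]
    rw [this]
    have hs : ∏ j, u i0 j ^ (Pi.single l 1 : Fin n → ℕ) j = u i0 l := by
      rw [Finset.prod_eq_single l]
      · simp
      · intro j _ hj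
        simp [Pi.single_eq_of_ne hj]
      · simp
    rw [hs]; ring
  rw [h2, hαprod]
end

section
/- (Uniqueness in Theorem 3.3) Assume C(k,p) ≥ r and C(n−k−1, m−p−1) ≥ r, the scalars λ_1, …, λ_r are all nonzero, the vectors [u_1]_{B_0}, …, [u_r]_{B_0} are linearly independent, for every α ∈ B_1 the vectors [u_1]_{O_α}, …, [u_r]_{O_α} are linearly independent, and there exists ξ = (ξ_{k+1}, …, ξ_n) ∈ ℂ^{n−k} such that the r numbers Σ_{l=k+1}^n ξ_l (u_i)_l, i = 1, …, r, are pairwise distinct. If λ'_1, …, λ'_r ∈ ℂ and u'_1, …, u'_r ∈ ℂ^n satisfy Σ_{i=1}^r λ'_i (u'_i)^α = Σ_{i=1}^r λ_i u_i^α for every multi-index α ∈ {0,1}^n with m−1 ≤ |α| ≤ m, then there is a permutation σ of {1,…,r} with λ'_i = λ_{σ(i)} and u'_i = u_{σ(i)} for all i. -/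
/-!
Flattening the tensor with rows indexed by `B₀` and columns by squarefree monomials `G` of
degree `m - p - 1` or `m - p` in the last `n - k` variables factors it as
`[u]_{B₀}ᵀ · diag λ · [u]_G`. As the `[u_i]_{B₀}` form a basis, writing `[u'_j]_{B₀}` in it gives
a transition matrix `C` with `diag λ · [u]_G = C · diag λ' · [u']_G`. For `G` ranging over `O_α`
the left side has independent rows, so `C` is invertible; comparing `G` with `G ∪ {l}` gives
`diag (u_l) · C = C · diag (u'_l)` for every variable `l > k`. A nonzero term `σ` in the Leibniz
expansion of `det C` therefore matches the last `n - k` coordinates of `u'_j` with those of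
`u_{σ j}`. Feeding this back into the flattening against `O_α` identifies `λ'_j u'_j^δ` with
`λ_{σ j} u_{σ j}^δ` for monomials `δ` of degree `p`, `p + 1` in the first `k` variables and one
more variable, which determines `λ'_j` and the remaining coordinates of `u'_j`.
-/

open Finset Matrix

namespace Matrix

variable {l m n R K : Type*}

theorem eq_of_mul_eq_mul_of_linearIndependent_row [Semiring R] [Fintype m]
    {A B : Matrix l m R} {M : Matrix m n R} (hM : LinearIndependent R M.row)
    (h : A * M = B * M) : A = B :=
  funext fun i => vecMul_injective_iff.mpr hM (congr_fun h i)

variable [Field K] [Fintype m]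

theorem exists_eq_mul_of_linearIndependent_row [Fintype n] {A : Matrix m n K}
    (hA : LinearIndependent K A.row) (hcard : Fintype.card m = Fintype.card n)
    (B : Matrix l n K) : ∃ D : Matrix l m K, B = D * A := by
  have hspan := hA.span_eq_top_of_card_eq_finrank' (by simpa using hcard)
  choose D hD using fun j =>
    (Submodule.mem_span_range_iff_exists_fun K).mp (hspan ▸ Submodule.mem_top (x := B j))
  exact ⟨D, funext fun j => by rw [← hD j]; exact (vecMul_eq_sum _ _).symm⟩

variable [DecidableEq m]

theorem linearIndependent_row_mul {C : Matrix m m K} {M : Matrix m n K} (hC : IsUnit C)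
    (hM : LinearIndependent K M.row) : LinearIndependent K (C * M).row := by
  rw [← vecMul_injective_iff] at hM ⊢
  have hCinj := vecMul_injective_iff_isUnit.mpr hC
  simpa only [Function.comp_def, vecMul_vecMul] using hM.comp hCinj

theorem isUnit_of_linearIndependent_row_mul {C : Matrix m m K} {M : Matrix m n K}
    (h : LinearIndependent K (C * M).row) : IsUnit C := by
  rw [← vecMul_injective_iff] at h
  refine vecMul_injective_iff_isUnit.mp (Function.Injective.of_comp (f := fun v => v ᵥ* M) ?_)
  simpa only [Function.comp_def, vecMul_vecMul] using h

theorem linearIndependent_row_of_mul {C : Matrix m m K} {M : Matrix m n K}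
    (h : LinearIndependent K (C * M).row) : LinearIndependent K M.row := by
  have hC := (isUnit_iff_isUnit_det C).mp (isUnit_of_linearIndependent_row_mul h)
  rw [show M = C⁻¹ * (C * M) from (nonsing_inv_mul_cancel_left C M hC).symm]
  exact linearIndependent_row_mul ((isUnit_iff_isUnit_det _).mpr (isUnit_nonsing_inv_det C hC)) h

theorem diagonal_mul_eq_mul_diagonal {C : Matrix m m K} {N N' : Matrix m n K} {d d' : m → K}
    (hN : N = C * N') (hdN : diagonal d * N = C * (diagonal d' * N'))
    (hN' : LinearIndependent K N'.row) : diagonal d * C = C * diagonal d' :=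
  eq_of_mul_eq_mul_of_linearIndependent_row hN' <| by
    rw [Matrix.mul_assoc, ← hN, hdN, Matrix.mul_assoc]

theorem exists_perm_forall_ne_zero_of_isUnit {C : Matrix m m K} (hC : IsUnit C) :
    ∃ σ : Equiv.Perm m, ∀ i, C (σ i) i ≠ 0 := by
  have hdet : C.det ≠ 0 := ((isUnit_iff_isUnit_det C).mp hC).ne_zero
  rw [det_apply] at hdet
  obtain ⟨σ, -, hσ⟩ := exists_ne_zero_of_sum_ne_zero hdet
  refine ⟨σ, fun i hi => hσ ?_⟩
  rw [prod_eq_zero (f := fun i => C (σ i) i) (mem_univ i) hi, smul_zero]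

end Matrix

section Decomposition

variable {ι V K : Type*} [Fintype ι] [DecidableEq V] [Field K]

/-- The entry of `∑ t, λ_t (1, u_t)^{⊗m}` at the squarefree monomial with support `A`. -/
def tensorEntry (lam : ι → K) (u : ι → V → K) (A : Finset V) : K :=
  ∑ t, lam t * ∏ j ∈ A, u t j

/-- Row `t` is the vector `[u_t]_G` of the squarefree monomials with supports `G y`. -/
def monomialMatrix {Y : Type*} (u : ι → V → K) (G : Y → Finset V) : Matrix ι Y K :=
  of fun t y => ∏ j ∈ G y, u t j

variable {X : Type*} {lam lam' : ι → K} {u u' : ι → V → K} {H : Finset V} {p q : ℕ}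
  {S : X → Finset V}

section Flattening

variable [DecidableEq ι]

theorem transpose_diagonal_mul_monomialMatrix_mul {Y : Type*} (G : Y → Finset V)
    (hGS : ∀ y x, Disjoint (G y) (S x)) :
    (diagonal lam * monomialMatrix u G)ᵀ * monomialMatrix u S =
      of fun y x => tensorEntry lam u (G y ∪ S x) := by
  ext y x
  rw [mul_apply]
  simp only [transpose_apply, diagonal_mul, monomialMatrix, of_apply, tensorEntry,
    prod_union (hGS y x)]
  exact sum_congr rfl fun t _ => by ring

theorem diagonal_mul_monomialMatrix_insert {Y : Type*} (G : Y → Finset V) {l : V}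
    (hl : ∀ y, l ∉ G y) :
    diagonal lam * monomialMatrix u (fun y => insert l (G y)) =
      diagonal (fun t => u t l) * (diagonal lam * monomialMatrix u G) := by
  ext t y
  simp only [diagonal_mul, monomialMatrix, of_apply, prod_insert (hl y)]
  ring

theorem diagonal_mul_monomialMatrix_eq_mul {D : Matrix ι ι K}
    (hSH : ∀ x, Disjoint (S x) H) (hS : ∀ x, #(S x) = p)
    (hSli : LinearIndependent K (monomialMatrix u S).row)
    (hD : monomialMatrix u' S = D * monomialMatrix u S)
    (hmatch : ∀ A : Finset V, #A = p + q ∨ #A = p + q + 1 →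
      tensorEntry lam' u' A = tensorEntry lam u A)
    {Y : Type*} (G : Y → Finset V) (hGH : ∀ y, G y ⊆ H) (hG : ∀ y, #(G y) = q ∨ #(G y) = q + 1) :
    diagonal lam * monomialMatrix u G = Dᵀ * (diagonal lam' * monomialMatrix u' G) := by
  have hGS : ∀ y x, Disjoint (G y) (S x) := fun y x => ((hSH x).mono_right (hGH y)).symm
  have h := eq_of_mul_eq_mul_of_linearIndependent_row hSli
    (A := (diagonal lam * monomialMatrix u G)ᵀ) (B := (diagonal lam' * monomialMatrix u' G)ᵀ * D)
    (by
      rw [Matrix.mul_assoc, ← hD, transpose_diagonal_mul_monomialMatrix_mul G hGS,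
        transpose_diagonal_mul_monomialMatrix_mul G hGS]
      ext y x
      refine (hmatch _ ?_).symm
      rw [card_union_of_disjoint (hGS y x), hS x]
      rcases hG y with h | h <;> omega)
  rw [← transpose_transpose (diagonal lam * _), h, transpose_mul, transpose_transpose]

end Flattening

theorem exists_perm_forall_mem_eq [Fintype X] (hlam : ∀ i, lam i ≠ 0)
    (hSH : ∀ x, Disjoint (S x) H) (hS : ∀ x, #(S x) = p) (hX : Fintype.card X = Fintype.card ι)
    (hSli : LinearIndependent K (monomialMatrix u S).row) (hH : H.Nonempty)
    (hO : ∀ l ∈ H, LinearIndependent K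
      (monomialMatrix u ((↑) : (H.erase l).powersetCard q → Finset V)).row)
    (hmatch : ∀ A : Finset V, #A = p + q ∨ #A = p + q + 1 →
      tensorEntry lam' u' A = tensorEntry lam u A) :
    ∃ σ : Equiv.Perm ι, ∀ j, ∀ l ∈ H, u' j l = u (σ j) l := by
  classical
  obtain ⟨D, hD⟩ := exists_eq_mul_of_linearIndependent_row hSli hX.symm (monomialMatrix u' S)
  have hmem : ∀ {l} (G : (H.erase l).powersetCard q),
      (G : Finset V) ⊆ H ∧ l ∉ (G : Finset V) ∧ #(G : Finset V) = q :=
    fun G => have ⟨hGH, hGq⟩ := mem_powersetCard.mp G.2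
      ⟨hGH.trans (erase_subset _ _), fun hl => notMem_erase _ _ (hGH hl), hGq⟩
  have hN : ∀ l ∈ H, diagonal lam * monomialMatrix u ((↑) : (H.erase l).powersetCard q → _) =
      Dᵀ * (diagonal lam' * monomialMatrix u' (↑)) := fun l _ =>
    diagonal_mul_monomialMatrix_eq_mul hSH hS hSli hD hmatch _ (fun G => (hmem G).1)
      fun G => Or.inl (hmem G).2.2
  have hNrows : ∀ l ∈ H, LinearIndependent K
      (diagonal lam * monomialMatrix u ((↑) : (H.erase l).powersetCard q → _)).row :=
    fun l hl => linearIndependent_row_mul (isUnit_diagonal.mpr (Pi.isUnit_iff.mpr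
      fun i => (hlam i).isUnit)) (hO l hl)
  obtain ⟨l0, hl0⟩ := hH
  obtain ⟨σ, hσ⟩ := exists_perm_forall_ne_zero_of_isUnit
    (isUnit_of_linearIndependent_row_mul (hN l0 hl0 ▸ hNrows l0 hl0))
  refine ⟨σ, fun j l hl => ?_⟩
  have hcomm := diagonal_mul_eq_mul_diagonal (d := fun t => u t l) (d' := fun t => u' t l)
    (hN l hl)
    (by
      rw [← diagonal_mul_monomialMatrix_insert _ fun G => (hmem G).2.1,
        ← diagonal_mul_monomialMatrix_insert _ fun G => (hmem G).2.1]
      exact diagonal_mul_monomialMatrix_eq_mul hSH hS hSli hD hmatch _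
        (fun G => insert_subset hl (hmem G).1)
        fun G => Or.inr (by rw [card_insert_of_notMem (hmem G).2.1, (hmem G).2.2]))
    (linearIndependent_row_of_mul (hN l hl ▸ hNrows l hl))
  have hentry := congr_fun (congr_fun hcomm (σ j)) j
  simp only [diagonal_mul, mul_diagonal, transpose_apply] at hentry
  exact (mul_right_cancel₀ (hσ j) (hentry.trans (mul_comm _ _))).symm

theorem mul_prod_eq_of_forall_mem_eq {σ : Equiv.Perm ι} (hσ : ∀ j, ∀ l ∈ H, u' j l = u (σ j) l)
    {l : V} (hO : LinearIndependent K
      (monomialMatrix u ((↑) : (H.erase l).powersetCard q → Finset V)).row)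
    (hmatch : ∀ A : Finset V, #A = p + q ∨ #A = p + q + 1 →
      tensorEntry lam' u' A = tensorEntry lam u A)
    {δ : Finset V} (hδ : Disjoint δ (H.erase l)) (hcard : #δ = p ∨ #δ = p + 1) (j : ι) :
    lam' j * ∏ i ∈ δ, u' j i = lam (σ j) * ∏ i ∈ δ, u (σ j) i := by
  refine Fintype.linearIndependent_iffₛ.mp (hO.comp σ σ.injective)
    (fun j => lam' j * ∏ i ∈ δ, u' j i) (fun j => lam (σ j) * ∏ i ∈ δ, u (σ j) i) ?_ j
  funext G
  obtain ⟨hGH, hGq⟩ := mem_powersetCard.mp G.2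
  have hδG : Disjoint δ G := hδ.mono_right hGH
  have hG : ∀ j, ∏ i ∈ (G : Finset V), u' j i = ∏ i ∈ (G : Finset V), u (σ j) i :=
    fun j => prod_congr rfl fun i hi => hσ j i (mem_of_mem_erase (hGH hi))
  have hA := hmatch (δ ∪ G) (by rw [card_union_of_disjoint hδG, hGq]; omega)
  rw [tensorEntry, tensorEntry, ← Equiv.sum_comp σ (fun t => lam t * ∏ i ∈ δ ∪ G, u t i)] at hA
  simp only [prod_union hδG, hG] at hA
  simp only [Finset.sum_apply, Pi.smul_apply, smul_eq_mul, mul_assoc]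
  exact hA

theorem eq_of_forall_mul_prod_eq {w w' : V → K} {μ μ' : K} {β : Finset V} {s : V} (hμ : μ ≠ 0)
    (hβH : Disjoint β H) (hβ : ∏ j ∈ β, w j ≠ 0) (hs : s ∈ H) (hws : w s ≠ 0)
    (hH : ∀ l ∈ H, w' l = w l)
    (h : ∀ δ : Finset V, Disjoint δ (H.erase s) → #δ = #β ∨ #δ = #β + 1 →
      μ' * ∏ j ∈ δ, w' j = μ * ∏ j ∈ δ, w j) :
    μ' = μ ∧ w' = w := by
  have hw : w' = w := by
    funext l
    by_cases hl : l ∈ H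
    · exact hH l hl
    -- a set `D` of size `#β` avoiding `l`, with `μ ∏_D w ≠ 0`; trade `l` for `s` if `l ∈ β`
    obtain ⟨D, hlD, hDH, hDβ, hD⟩ : ∃ D : Finset V, l ∉ D ∧ Disjoint D (H.erase s) ∧
        #D = #β ∧ ∏ j ∈ D, w j ≠ 0 := by
      by_cases hlβ : l ∈ β
      · have hsβ : s ∉ β.erase l := fun h => disjoint_left.mp hβH (mem_of_mem_erase h) hs
        refine ⟨insert s (β.erase l), ?_, ?_, ?_, ?_⟩
        · simp [show l ≠ s by rintro rfl; exact hl hs]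
        · exact disjoint_insert_left.mpr ⟨notMem_erase s H,
            hβH.mono (erase_subset _ _) (erase_subset _ _)⟩
        · rw [card_insert_of_notMem hsβ, card_erase_of_mem hlβ]
          have := card_pos.mpr ⟨l, hlβ⟩
          omega
        · rw [prod_insert hsβ]
          exact mul_ne_zero hws (right_ne_zero_of_mul (mul_prod_erase β w hlβ ▸ hβ))
      · exact ⟨β, hlβ, hβH.mono_right (erase_subset _ _), rfl, hβ⟩
    have h1 := h D hDH (Or.inl hDβ)
    have h2 := h (insert l D)
      (disjoint_insert_left.mpr ⟨fun h => hl (mem_of_mem_erase h), hDH⟩)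
      (Or.inr (by rw [card_insert_of_notMem hlD, hDβ]))
    rw [prod_insert hlD, prod_insert hlD] at h2
    refine mul_left_cancel₀ (mul_ne_zero hμ hD) ?_
    linear_combination h2 - w' l * h1
  refine ⟨?_, hw⟩
  have hβeq := h β (hβH.mono_right (erase_subset _ _)) (Or.inl rfl)
  rw [hw] at hβeq
  exact mul_right_cancel₀ hβ hβeq

theorem exists_perm_eq_of_tensorEntry_eq [Fintype X] (hlam : ∀ i, lam i ≠ 0)
    (hSH : ∀ x, Disjoint (S x) H) (hS : ∀ x, #(S x) = p) (hX : Fintype.card X = Fintype.card ι)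
    (hSli : LinearIndependent K (monomialMatrix u S).row) (hH : H.Nonempty) (hq : 0 < q)
    (hO : ∀ l ∈ H, LinearIndependent K
      (monomialMatrix u ((↑) : (H.erase l).powersetCard q → Finset V)).row)
    (hmatch : ∀ A : Finset V, #A = p + q ∨ #A = p + q + 1 →
      tensorEntry lam' u' A = tensorEntry lam u A) :
    ∃ σ : Equiv.Perm ι, ∀ i, lam' i = lam (σ i) ∧ u' i = u (σ i) := by
  obtain ⟨σ, hσ⟩ := exists_perm_forall_mem_eq hlam hSH hS hX hSli hH hO hmatch
  refine ⟨σ, fun j => ?_⟩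
  obtain ⟨x, hx⟩ := Function.ne_iff.mp (hSli.ne_zero (σ j))
  obtain ⟨l0, hl0⟩ := hH
  obtain ⟨G, hG⟩ := Function.ne_iff.mp ((hO l0 hl0).ne_zero (σ j))
  obtain ⟨hGH, hGq⟩ := mem_powersetCard.mp G.2
  obtain ⟨s, hsG⟩ := card_pos.mp (hGq ▸ hq)
  exact eq_of_forall_mul_prod_eq (hlam (σ j)) (hSH x) hx (mem_of_mem_erase (hGH hsG))
    (prod_ne_zero_iff.mp hG s hsG) (hσ j) fun δ hδ hcard =>
      mul_prod_eq_of_forall_mem_eq hσ (hO s (mem_of_mem_erase (hGH hsG))) hmatch hδ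
        (hS x ▸ hcard) j

end Decomposition

section MultiIndex

variable {V M : Type*} [Fintype V] [CommMonoid M] {α : V → ℕ}

theorem prod_pow_eq_prod_filter_ne_zero (x : V → M) (hα : ∀ j, α j ≤ 1) :
    ∏ j, x j ^ α j = ∏ j with α j ≠ 0, x j := by
  rw [prod_filter]
  refine prod_congr rfl fun j _ => ?_
  rcases Nat.le_one_iff_eq_zero_or_eq_one.mp (hα j) with h | h <;> simp [h]

theorem sum_eq_card_filter_ne_zero (hα : ∀ j, α j ≤ 1) : ∑ j, α j = #{j | α j ≠ 0} := by
  rw [card_filter]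
  refine sum_congr rfl fun j _ => ?_
  have := hα j
  split_ifs with h <;> omega

theorem linearIndependent_monomialMatrix_filter_ne_zero {ι K X : Type*} [Field K]
    {u : ι → V → K} {β : X → V → ℕ} (hβ : ∀ x j, β x j ≤ 1)
    (h : LinearIndependent K fun i x => ∏ j, u i j ^ β x j) :
    LinearIndependent K (monomialMatrix u fun x => ({j | β x j ≠ 0} : Finset V)).row := by
  convert h using 1
  funext i x
  exact (prod_pow_eq_prod_filter_ne_zero (u i) (hβ x)).symm

variable [DecidableEq V]

theorem filter_ite_mem_ne_zero (A : Finset V) :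
    ({j | (if j ∈ A then 1 else 0 : ℕ) ≠ 0} : Finset V) = A := by
  ext j
  by_cases hj : j ∈ A <;> simp [hj]

theorem tensorEntry_eq_of_forall_le_one {ι K : Type*} [Fintype ι] [Field K]
    {lam lam' : ι → K} {u u' : ι → V → K} {a b : ℕ}
    (h : ∀ α : V → ℕ, (∀ j, α j ≤ 1) → a ≤ ∑ j, α j → ∑ j, α j ≤ b →
      ∑ i, lam' i * ∏ j, u' i j ^ α j = ∑ i, lam i * ∏ j, u i j ^ α j)
    (A : Finset V) (haA : a ≤ #A) (hAb : #A ≤ b) :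
    tensorEntry lam' u' A = tensorEntry lam u A := by
  have hα : ∀ j, (if j ∈ A then 1 else 0 : ℕ) ≤ 1 := fun j => by split_ifs <;> simp
  have hsum := sum_eq_card_filter_ne_zero hα
  rw [filter_ite_mem_ne_zero] at hsum
  have := h _ hα (hsum ▸ haA) (hsum ▸ hAb)
  simpa only [tensorEntry, prod_pow_eq_prod_filter_ne_zero _ hα, filter_ite_mem_ne_zero] using this

end MultiIndex

theorem memB1_ite_mem_insert {n k p : ℕ} {B : Finset (Fin n)} (hB : ∀ j ∈ B, (j : ℕ) < k)
    (hBp : #B = p) {l : Fin n} (hl : k ≤ (l : ℕ)) :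
    MemB1 n k p (fun j => if j ∈ insert l B then 1 else 0) := by
  have hα : ∀ j, (if j ∈ insert l B then 1 else 0 : ℕ) ≤ 1 := fun j => by split_ifs <;> simp
  have hlB : l ∉ B := fun h => (hB l h).not_ge hl
  refine ⟨hα, ?_, ?_⟩
  · rw [sum_eq_card_filter_ne_zero hα, filter_ite_mem_ne_zero, card_insert_of_notMem hlB, hBp]
  · rw [sum_boole, Nat.cast_id, card_eq_one]
    refine ⟨l, ext fun j => ⟨fun hj => ?_, fun hj => ?_⟩⟩
    · simp only [mem_filter, mem_univ, true_and, mem_insert] at hj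
      exact mem_singleton.mpr (hj.2.resolve_right fun hjB => (hB j hjB).not_ge hj.1)
    · simp [mem_singleton.mp hj, hl]

theorem linearIndependent_monomialMatrix_of_memOalpha {ι K : Type*} [Field K] {n m p k : ℕ}
    {u : ι → Fin n → K} {α : Fin n → ℕ} {l : Fin n} (hl : α l ≠ 0)
    (h : LinearIndependent K fun i (γ : {γ : Fin n → ℕ // MemOalpha n m p k α γ}) =>
      ∏ j, u i j ^ γ.1 j) :
    LinearIndependent K (monomialMatrix u ((↑) :
      (({j | k ≤ (j : ℕ)} : Finset (Fin n)).erase l).powersetCard (m - p - 1) → _)).row := by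
  let supp : {γ : Fin n → ℕ // MemOalpha n m p k α γ} →
      (({j | k ≤ (j : ℕ)} : Finset (Fin n)).erase l).powersetCard (m - p - 1) :=
    fun γ => ⟨({j | γ.1 j ≠ 0} : Finset (Fin n)), mem_powersetCard.mpr ⟨fun j hj => by
      obtain ⟨hk, hαj⟩ := γ.2.2.2 j (mem_filter.mp hj).2
      exact mem_erase.mpr ⟨by rintro rfl; exact hl hαj, by simpa using hk⟩,
      (sum_eq_card_filter_ne_zero γ.2.1).symm.trans γ.2.2.1⟩⟩
  exact LinearIndependent.of_comp (LinearMap.funLeft K K supp)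
    (linearIndependent_monomialMatrix_filter_ne_zero (fun γ => γ.2.1) h)

theorem decomposition_unique_up_to_permutation_general
    (n m r p k : ℕ) (hm : 3 ≤ m) (hr : 0 < r)
    (hp2 : p ≤ m - 2)
    (hbin1 : r ≤ Nat.choose (n - k - 1) (m - p - 1))
    (lam : Fin r → ℂ) (hlam : ∀ i, lam i ≠ 0)
    (u : Fin r → Fin n → ℂ)
    (B0 : Finset (Fin n → ℕ))
    (hB0 : ∀ β ∈ B0, IsB0Monomial n k p β)
    (hB0card : B0.card = r)
    (huB0 : LinearIndependent ℂ
      (fun i : Fin r => fun β : {β : Fin n → ℕ // β ∈ B0} => ∏ j, u i j ^ β.1 j))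
    (huOα : ∀ α : Fin n → ℕ, MemB1 n k p α → LinearIndependent ℂ
      (fun i : Fin r => fun γ : {γ : Fin n → ℕ // MemOalpha n m p k α γ} =>
        ∏ j, u i j ^ γ.1 j))
    (lam' : Fin r → ℂ) (u' : Fin r → Fin n → ℂ)
    (hmatch : ∀ α : Fin n → ℕ, (∀ j, α j ≤ 1) →
      m - 1 ≤ ∑ j, α j → (∑ j, α j) ≤ m →
      ∑ i, lam' i * ∏ j, u' i j ^ α j = ∑ i, lam i * ∏ j, u i j ^ α j) :
    ∃ σ : Equiv.Perm (Fin r), ∀ i : Fin r, lam' i = lam (σ i) ∧ u' i = u (σ i) := by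
  have hq : 0 < m - p - 1 := by omega
  have hkn : k < n := by
    by_contra hkn
    rw [Nat.choose_eq_zero_of_lt (by omega)] at hbin1
    omega
  obtain ⟨β0, hβ0⟩ : B0.Nonempty := card_pos.mp (hB0card ▸ hr)
  have hsupp : ∀ β ∈ B0, ∀ j ∈ ({j | β j ≠ 0} : Finset (Fin n)), (j : ℕ) < k :=
    fun β hβ j hj => (hB0 β hβ).2.2 j (mem_filter.mp hj).2
  have hcard : ∀ β ∈ B0, #({j | β j ≠ 0} : Finset (Fin n)) = p := fun β hβ =>
    (sum_eq_card_filter_ne_zero (hB0 β hβ).1).symm.trans (hB0 β hβ).2.1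
  exact exists_perm_eq_of_tensorEntry_eq (H := {j | k ≤ (j : ℕ)}) (q := m - p - 1)
    (S := fun β : B0 => {j | β.1 j ≠ 0}) hlam
    (fun β => disjoint_left.mpr fun j hj hjk =>
      (hsupp β.1 β.2 j hj).not_ge (mem_filter.mp hjk).2)
    (fun β => hcard β.1 β.2) (by simp [hB0card])
    (linearIndependent_monomialMatrix_filter_ne_zero (fun β => (hB0 β.1 β.2).1) huB0)
    ⟨⟨k, hkn⟩, by simp⟩ hq
    (fun l hl => linearIndependent_monomialMatrix_of_memOalpha (by simp)
      (huOα _ (memB1_ite_mem_insert (hsupp β0 hβ0) (hcard β0 hβ0) (mem_filter.mp hl).2)))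
    fun A hA => tensorEntry_eq_of_forall_le_one hmatch A (by omega) (by omega)

/-- uniqueness in Theorem 3.3: assume `C(k,p) ≥ r`,
`C(n-k-1, m-p-1) ≥ r`, the scalars `λ i` are nonzero, the vectors `[u i]_{B₀}` are
linearly independent, for every `α ∈ B₁` the vectors `[u i]_{O_α}` are linearly
independent, and there is `ξ ∈ ℂ^{n-k}` (entries `ξ_{k+1}, …, ξ_n`) such that the `r`
numbers `∑_{l=k+1}^n ξ_l (u i)_l` are pairwise distinct.  If `λ'`, `u'` satisfy
`∑ i, λ' i (u' i)^α = ∑ i, λ i (u i)^α` for every 0/1-multi-index `α` with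
`m - 1 ≤ |α| ≤ m`, then the decompositions agree up to a permutation. -/
theorem decomposition_unique_up_to_permutation
    (n m r p k : ℕ) (hn : 0 < n) (hm : 3 ≤ m) (hr : 0 < r)
    (hp1 : 1 ≤ p) (hp2 : p ≤ m - 2) (hk1 : p ≤ k) (hk2 : k ≤ n - m + p)
    (hbin0 : r ≤ Nat.choose k p) (hbin1 : r ≤ Nat.choose (n - k - 1) (m - p - 1))
    (lam : Fin r → ℂ) (hlam : ∀ i, lam i ≠ 0)
    (u : Fin r → Fin n → ℂ)
    (B0 : Finset (Fin n → ℕ))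
    (hB0 : ∀ β ∈ B0, IsB0Monomial n k p β)
    (hB0card : B0.card = r)
    (hB0first : ∀ β ∈ B0, ∀ γ : Fin n → ℕ, IsB0Monomial n k p γ →
      toLex β ≤ toLex γ → γ ∈ B0)
    (huB0 : LinearIndependent ℂ
      (fun i : Fin r => fun β : {β : Fin n → ℕ // β ∈ B0} => ∏ j, u i j ^ β.1 j))
    (huOα : ∀ α : Fin n → ℕ, MemB1 n k p α → LinearIndependent ℂ
      (fun i : Fin r => fun γ : {γ : Fin n → ℕ // MemOalpha n m p k α γ} =>
        ∏ j, u i j ^ γ.1 j))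
    (ξ : Fin n → ℂ)
    (hξ : ∀ i1 i2 : Fin r,
      (∑ l ∈ Finset.univ.filter (fun l : Fin n => k ≤ (l : ℕ)), ξ l * u i1 l) =
      (∑ l ∈ Finset.univ.filter (fun l : Fin n => k ≤ (l : ℕ)), ξ l * u i2 l) → i1 = i2)
    (lam' : Fin r → ℂ) (u' : Fin r → Fin n → ℂ)
    (hmatch : ∀ α : Fin n → ℕ, (∀ j, α j ≤ 1) →
      m - 1 ≤ ∑ j, α j → (∑ j, α j) ≤ m →
      ∑ i, lam' i * ∏ j, u' i j ^ α j = ∑ i, lam i * ∏ j, u i j ^ α j) :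
    ∃ σ : Equiv.Perm (Fin r), ∀ i : Fin r, lam' i = lam (σ i) ∧ u' i = u (σ i) :=
  decomposition_unique_up_to_permutation_general n m r p k hm hr hp2 hbin1 lam hlam u B0 hB0 hB0card
    huB0 huOα lam' u' hmatch
end

section
/- Let n ≥ 7 be an integer. Then max over integers p ∈ {1, 2} and k ∈ [p, n−4+p] of min(C(k, p), C(n−k−1, 3−p)) = ⌊(2n − 1 − √(8n−7))/2⌋. -/
/-- for an integer `n ≥ 7`,
`max_{p ∈ {1,2}} max_{p ≤ k ≤ n-4+p} min (C(k,p)) (C(n-k-1, 3-p))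
  = ⌊(2n - 1 - √(8n-7))/2⌋` (the `m = 4` case of the largest computable rank). -/
theorem largest_rank_order_four (n : ℕ) (hn : 7 ≤ n) :
    (((Finset.Icc 1 2).sup fun p =>
        (Finset.Icc p (n - 4 + p)).sup fun k =>
          min (Nat.choose k p) (Nat.choose (n - k - 1) (3 - p)) : ℕ) : ℤ) =
      ⌊(2 * (n : ℝ) - 1 - Real.sqrt (8 * (n : ℝ) - 7)) / 2⌋ := by
  obtain ⟨m, rfl⟩ : ∃ m, n = m + 7 := ⟨n - 7, by omega⟩
  have hP : ∃ t, 2 * (m + 6) ≤ t * (t + 1) := ⟨m + 6, by nlinarith⟩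
  have hspec := Nat.find_spec hP
  have h2le : 2 ≤ Nat.find hP := by
    by_contra h
    push_neg at h
    have hf : Nat.find hP ≤ 1 := by omega
    nlinarith [hspec]
  have hub : Nat.find hP ≤ m + 5 := Nat.find_le (by nlinarith)
  obtain ⟨j, hj⟩ : ∃ j, Nat.find hP = j + 2 := ⟨Nat.find hP - 2, by omega⟩
  have hfind : 2 * (m + 6) ≤ (j + 2) * (j + 3) := by
    have := hspec; rw [hj] at this; linarith [this]
  have hmin : (j + 1) * (j + 2) < 2 * (m + 6) := by
    have h := Nat.find_min hP (show j + 1 < Nat.find hP by omega)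
    have h2 : (j + 1) * (j + 1 + 1) = (j + 1) * (j + 2) := by ring
    omega
  have hjm : j ≤ m + 3 := by omega
  set k0 := m + 4 - j with hk0
  -- key nat inequalities
  have hA : 2 * k0 ≤ (j + 2) * (j + 1) := by
    have h1 : (j + 2) * (j + 3) = (j + 2) * (j + 1) + (2 * j + 4) := by ring
    omega
  have hB : (j + 1) * j < 2 * (k0 + 1) := by
    have h1 : (j + 1) * (j + 2) = (j + 1) * j + (2 * j + 2) := by ring
    omega
  have hc2 : (j + 2).choose 2 = (j + 2) * (j + 1) / 2 := by
    rw [Nat.choose_two_right]; norm_num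
  have hc1 : (j + 1).choose 2 = (j + 1) * j / 2 := by
    rw [Nat.choose_two_right]; norm_num
  -- the main bound for p = 1
  have hBmain : ∀ k, 1 ≤ k → k ≤ m + 4 → min k ((m + 7 - k - 1).choose 2) ≤ k0 := by
    intro k hk1 hk2
    rcases le_or_gt k k0 with h | h
    · exact le_trans (min_le_left _ _) h
    · refine le_trans (min_le_right _ _) ?_
      have hle : m + 7 - k - 1 ≤ j + 1 := by omega
      calc (m + 7 - k - 1).choose 2 ≤ (j + 1).choose 2 := Nat.choose_le_choose 2 hle
        _ ≤ k0 := by rw [hc1]; omega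
  have hL : ((Finset.Icc 1 2).sup fun p =>
        (Finset.Icc p (m + 7 - 4 + p)).sup fun k =>
          min (Nat.choose k p) (Nat.choose (m + 7 - k - 1) (3 - p))) = k0 := by
    apply le_antisymm
    · refine Finset.sup_le fun p hp => ?_
      rw [Finset.mem_Icc] at hp
      obtain ⟨hp1, hp2⟩ := hp
      refine Finset.sup_le fun k hk => ?_
      rw [Finset.mem_Icc] at hk
      interval_cases p
      · rw [Nat.choose_one_right]
        exact hBmain k hk.1 (by omega)
      · rw [Nat.choose_one_right]
        have h := hBmain (m + 6 - k) (by omega) (by omega)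
        rw [show m + 7 - (m + 6 - k) - 1 = k from by omega] at h
        rw [show m + 7 - k - 1 = m + 6 - k from by omega, min_comm]
        exact h
    · refine le_trans ?_ (Finset.le_sup (f := fun p =>
        (Finset.Icc p (m + 7 - 4 + p)).sup fun k =>
          min (Nat.choose k p) (Nat.choose (m + 7 - k - 1) (3 - p)))
          (show (1 : ℕ) ∈ Finset.Icc 1 2 by decide))
      have hmem : k0 ∈ Finset.Icc 1 (m + 7 - 4 + 1) := by
        rw [Finset.mem_Icc]; omega
      refine le_trans ?_ (Finset.le_sup hmem)
      rw [Nat.choose_one_right, show m + 7 - k0 - 1 = j + 2 from by omega, hc2]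
      exact le_min le_rfl (by omega)
  rw [hL]
  symm
  rw [Int.floor_eq_iff]
  have hk0R : (k0 : ℝ) = (m : ℝ) + 4 - j := by
    have hZ : (k0 : ℤ) = (m : ℤ) + 4 - j := by omega
    exact_mod_cast congrArg (Int.cast : ℤ → ℝ) hZ
  have hfR : 2 * ((m : ℝ) + 6) ≤ ((j : ℝ) + 2) * ((j : ℝ) + 3) := by exact_mod_cast hfind
  have hmR : ((j : ℝ) + 1) * ((j : ℝ) + 2) < 2 * ((m : ℝ) + 6) := by exact_mod_cast hmin
  have hsqle : Real.sqrt (8 * ((m : ℝ) + 7) - 7) ≤ 2 * (j : ℝ) + 5 := by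
    calc Real.sqrt (8 * ((m : ℝ) + 7) - 7) ≤ Real.sqrt ((2 * (j : ℝ) + 5) ^ 2) :=
          Real.sqrt_le_sqrt (by nlinarith)
      _ = 2 * (j : ℝ) + 5 := Real.sqrt_sq (by positivity)
  have hsqlt : 2 * (j : ℝ) + 3 < Real.sqrt (8 * ((m : ℝ) + 7) - 7) := by
    rw [Real.lt_sqrt (by positivity)]
    nlinarith
  constructor
  · push_cast
    rw [hk0R, le_div_iff₀ (by norm_num : (0:ℝ) < 2)]
    push_cast at hsqle ⊢
    linarith
  · push_cast
    rw [hk0R, div_lt_iff₀ (by norm_num : (0:ℝ) < 2)]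
    push_cast at hsqlt ⊢
    linarith
end

section
/- Let m ≥ 2 and n be integers with n ≥ 2m−1, and let p be an integer with 1 ≤ p and 2p ≤ m−1. Then C(⌊(n−1)/2⌋, p) ≤ C(n−1−⌊(n−1)/2⌋, m−p−1). -/
lemma choose_right_mono_aux (a : ℕ) {p q : ℕ} (h1 : p ≤ q) (h2 : q ≤ a / 2) :
    Nat.choose a p ≤ Nat.choose a q := by
  induction q, h1 using Nat.le_induction with
  | base => exact le_rfl
  | succ q hpq ih =>
      have hq : q < a / 2 := by omega
      exact (ih (by omega)).trans (Nat.choose_le_succ_of_lt_half_left hq)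

lemma choose_right_mono (a : ℕ) {p q : ℕ} (h1 : p ≤ q) (h2 : p + q ≤ a) :
    Nat.choose a p ≤ Nat.choose a q := by
  by_cases hq : q ≤ a / 2
  · exact choose_right_mono_aux a h1 hq
  · have hq' : a - q ≤ a / 2 := by omega
    have := choose_right_mono_aux a (show p ≤ a - q by omega) hq'
    rwa [Nat.choose_symm (show q ≤ a by omega)] at this

/-- for integers `m ≥ 2`, `n ≥ 2m - 1` and `1 ≤ p` with `2p ≤ m - 1`,
`C(⌊(n-1)/2⌋, p) ≤ C(n - 1 - ⌊(n-1)/2⌋, m - p - 1)`. -/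
theorem choose_half_le
    (m n p : ℕ) (hm : 2 ≤ m) (hn : 2 * m - 1 ≤ n)
    (hp1 : 1 ≤ p) (hp2 : 2 * p ≤ m - 1) :
    Nat.choose ((n - 1) / 2) p ≤ Nat.choose (n - 1 - (n - 1) / 2) (m - p - 1) := by
  set N := n - 1 with hN
  have h1 : N / 2 ≤ N - N / 2 := by omega
  have h2 : Nat.choose (N / 2) p ≤ Nat.choose (N - N / 2) p :=
    Nat.choose_le_choose p h1
  refine h2.trans (choose_right_mono _ (by omega) (by omega))
end
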